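/- Let S be a skeleton with head e and periphery S₀, and let K = ⋃_{u ∈ S₀} K(u), where K(u) = conv{0, e, u}. Then K is a convex set containing 0 and e, and e is an extreme point of K. -/

import Mathlib

/-!
Axiom (3) extends to nonnegative coefficients: if `t • e = ∑ aᵢ • uᵢ` with `t > 0` and all
`uᵢ ∈ S₀`, then `t < ∑ aᵢ`, and `t ≤ ∑_{i ≠ j} aᵢ` as soon as the right-hand side is positive
(a single term `a • u` is split into two halves to reach `n ≥ 2`).

Convexity: axiom (2) writes `l • u + (1 - l) • v = a • e + b • w`; rewriting this as
`(a + b) • e = l • u + (1 - l) • v + b • (e - w)` gives `a + b ≤ 1`, so every segment `[u, v]`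
with `u, v ∈ S₀` lies in some `K(w)`. As `conv {0, e, u, v}` is the join of `[0, e]` and
`[u, v]`, and `[0, e] ⊆ K(w)`, two points of `K(u)` and `K(v)` have their whole segment in `K`.

Extremality: if `e = λ x + μ y` with `x ∈ K(u)`, `y ∈ K(v)`, collecting coefficients gives
`(1 - A) • e = β • u + γ • v` with `β + γ ≤ 1 - A`, which the strict inequality rules out
unless `β = γ = 0`; then `A = 1` forces `x = e`.
-/

open Set

/-- A *skeleton* with head `e` in a real vector space `X`. -/
structure IsSkeleton {X : Type*} [AddCommGroup X] [Module ℝ X] (S : Set X) (e : X) : Prop where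
  head_ne : e ≠ 0
  zero_mem : (0 : X) ∈ S
  head_mem : e ∈ S
  compl_mem : ∀ u ∈ S, e - u ∈ S
  comb : ∀ u ∈ S, ∀ v ∈ S, ∀ l : ℝ, 0 ≤ l → l ≤ 1 →
    ∃ w ∈ S \ {0, e}, ∃ a b : ℝ, 0 ≤ a ∧ 0 ≤ b ∧
      l • u + (1 - l) • v = a • e + b • w
  head_sum : ∀ n : ℕ, 2 ≤ n → ∀ u : Fin n → X, ∀ a : Fin n → ℝ,
    (∀ i, u i ∈ S \ {0, e}) → (∀ i, 0 < a i) →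
    e = ∑ i, a i • u i → ∀ j, 1 ≤ ∑ i ∈ Finset.univ.erase j, a i

theorem mem_convexHull_zero_triple_iff {𝕜 E : Type*} [Field 𝕜] [LinearOrder 𝕜]
    [IsStrictOrderedRing 𝕜] [AddCommGroup E] [Module 𝕜 E] {x y z : E} :
    x ∈ convexHull 𝕜 {0, y, z} ↔
      ∃ a b : 𝕜, 0 ≤ a ∧ 0 ≤ b ∧ a + b ≤ 1 ∧ a • y + b • z = x := by
  constructor
  · rw [← convexJoin_singleton_segment, mem_convexJoin]
    rintro ⟨_, rfl, _, ⟨p, q, hp, hq, hpq, rfl⟩, r, s, hr, hs, hrs, rfl⟩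
    exact ⟨s * p, s * q, by positivity, by positivity, by nlinarith, by module⟩
  · rintro ⟨a, b, ha, hb, hab, rfl⟩
    have := (convex_convexHull 𝕜 ({0, y, z} : Set E)).sum_mem (t := Finset.univ)
      (w := ![1 - a - b, a, b]) (z := ![0, y, z])
      (by simp [Fin.forall_fin_succ, ha, hb]; linarith) (by simp [Fin.sum_univ_three]; ring)
      (by simp [Fin.forall_fin_succ, subset_convexHull 𝕜 _ _])
    simpa [Fin.sum_univ_three] using this

theorem Finset.sum_filter_pos_smul {ι R M : Type*} [Semiring R] [LinearOrder R]
    [AddCommMonoid M] [Module R M] {s : Finset ι} {u : ι → M} {a : ι → R}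
    (ha : ∀ i ∈ s, 0 ≤ a i) :
    ∑ i ∈ s with 0 < a i, a i • u i = ∑ i ∈ s, a i • u i :=
  Finset.sum_filter_of_ne fun i hi hne =>
    (ha i hi).lt_of_ne (left_ne_zero_of_smul hne).symm

namespace IsSkeleton

variable {X : Type*} [AddCommGroup X] [Module ℝ X] {S : Set X} {e : X}

theorem periphery_nonempty (h : IsSkeleton S e) : (S \ {0, e}).Nonempty :=
  let ⟨w, hw, _⟩ := h.comb 0 h.zero_mem 0 h.zero_mem 0 le_rfl zero_le_one
  ⟨w, hw⟩

theorem sub_mem_periphery (h : IsSkeleton S e) {w : X} (hw : w ∈ S \ {0, e}) :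
    e - w ∈ S \ {0, e} := by
  obtain ⟨hwS, hw0e⟩ := hw
  simp only [mem_sdiff, mem_insert_iff, mem_singleton_iff, not_or] at hw0e ⊢
  exact ⟨h.compl_mem w hwS, fun h0 => hw0e.2 (sub_eq_zero.mp h0).symm,
    fun he => hw0e.1 (sub_eq_self.mp he)⟩

theorem le_sum_erase_of_pos (h : IsSkeleton S e) {ι : Type*} [DecidableEq ι] {s : Finset ι}
    {u : ι → X} {a : ι → ℝ} {t : ℝ} (hs : 2 ≤ s.card) (hu : ∀ i ∈ s, u i ∈ S \ {0, e})
    (ha : ∀ i ∈ s, 0 < a i) (ht : 0 < t) (he : t • e = ∑ i ∈ s, a i • u i) {j : ι}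
    (hj : j ∈ s) : t ≤ ∑ i ∈ s.erase j, a i := by
  let f : Fin s.card ≃ s := s.equivFin.symm
  have hsum_smul : ∑ k, (a (f k) / t) • u (f k) = ∑ i ∈ s, (a i / t) • u i :=
    (f.sum_comp fun i : s => (a i / t) • u i).trans (s.sum_coe_sort fun i => (a i / t) • u i)
  have hsum : ∑ k, a (f k) / t = ∑ i ∈ s, a i / t :=
    (f.sum_comp fun i : s => a i / t).trans (s.sum_coe_sort fun i => a i / t)
  have key := h.head_sum s.card hs (fun k => u (f k)) (fun k => a (f k) / t)
    (fun k => hu _ (f k).2) (fun k => div_pos (ha _ (f k).2) ht)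
    (by
      rw [hsum_smul]
      simp only [div_eq_inv_mul, mul_smul, ← Finset.smul_sum, ← he, inv_smul_smul₀ ht.ne'])
    (f.symm ⟨j, hj⟩)
  rw [Finset.sum_erase_eq_sub (Finset.mem_univ _), hsum] at key
  simp only [Equiv.apply_symm_apply, ← Finset.sum_div] at key
  rwa [← sub_div, le_div_iff₀ ht, one_mul, ← Finset.sum_erase_eq_sub hj] at key

theorem lt_sum_of_pos (h : IsSkeleton S e) {ι : Type*} [DecidableEq ι] {s : Finset ι}
    {u : ι → X} {a : ι → ℝ} {t : ℝ} (hu : ∀ i ∈ s, u i ∈ S \ {0, e})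
    (ha : ∀ i ∈ s, 0 < a i) (ht : 0 < t) (he : t • e = ∑ i ∈ s, a i • u i) :
    t < ∑ i ∈ s, a i := by
  obtain ⟨j, hj⟩ : s.Nonempty := by
    rw [Finset.nonempty_iff_ne_empty]
    rintro rfl
    exact h.head_ne (by simpa [ht.ne'] using he)
  rcases le_or_gt 2 s.card with hs | hs
  · have := h.le_sum_erase_of_pos hs hu ha ht he hj
    linarith [Finset.add_sum_erase s a hj, ha j hj]
  · obtain ⟨i, rfl⟩ : ∃ i, s = {i} := Finset.card_eq_one.mp (by
      have := Finset.card_pos.mpr ⟨j, hj⟩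
      omega)
    have := h.le_sum_erase_of_pos (s := .univ) (u := fun _ : Fin 2 => u i)
      (a := fun _ => a i / 2) (by simp) (fun _ _ => hu i (Finset.mem_singleton_self i))
      (fun _ _ => half_pos (ha i (Finset.mem_singleton_self i))) ht
      (by rw [he, Finset.sum_singleton, Fin.sum_univ_two, ← add_smul, add_halves])
      (Finset.mem_univ 0)
    simp only [Finset.sum_const, Finset.card_erase_of_mem, Finset.mem_univ, Finset.card_univ,
      Fintype.card_fin, Nat.add_one_sub_one, one_smul, Finset.sum_singleton] at this ⊢
    linarith [ha i (Finset.mem_singleton_self i)]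

theorem lt_sum (h : IsSkeleton S e) {ι : Type*} [DecidableEq ι] {s : Finset ι}
    {u : ι → X} {a : ι → ℝ} {t : ℝ} (hu : ∀ i ∈ s, u i ∈ S \ {0, e})
    (ha : ∀ i ∈ s, 0 ≤ a i) (ht : 0 < t) (he : t • e = ∑ i ∈ s, a i • u i) :
    t < ∑ i ∈ s, a i := by
  calc t < ∑ i ∈ s with 0 < a i, a i :=
        h.lt_sum_of_pos (fun i hi => hu i (Finset.mem_filter.mp hi).1)
          (fun i hi => (Finset.mem_filter.mp hi).2) ht
          (by rw [he, Finset.sum_filter_pos_smul ha])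
    _ ≤ ∑ i ∈ s, a i := Finset.sum_le_sum_of_subset_of_nonneg (Finset.filter_subset _ _)
        fun i hi _ => ha i hi

theorem le_sum_erase (h : IsSkeleton S e) {ι : Type*} [DecidableEq ι] {s : Finset ι}
    {u : ι → X} {a : ι → ℝ} {t : ℝ} (hu : ∀ i ∈ s, u i ∈ S \ {0, e})
    (ha : ∀ i ∈ s, 0 ≤ a i) (ht : 0 < t) (he : t • e = ∑ i ∈ s, a i • u i) {j : ι}
    (hj : j ∈ s) (hpos : 0 < ∑ i ∈ s.erase j, a i) : t ≤ ∑ i ∈ s.erase j, a i := by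
  rcases (ha j hj).lt_or_eq with haj | haj
  · obtain ⟨i, hi, hai⟩ :=
      Finset.exists_lt_of_sum_lt (s := s.erase j) (f := fun _ => (0 : ℝ)) (g := a)
        (by simpa using hpos)
    have hjs : j ∈ s.filter (0 < a ·) := Finset.mem_filter.mpr ⟨hj, haj⟩
    calc t ≤ ∑ i ∈ (s.filter (0 < a ·)).erase j, a i :=
          h.le_sum_erase_of_pos
            (Finset.one_lt_card.mpr ⟨i, Finset.mem_filter.mpr ⟨Finset.mem_of_mem_erase hi, hai⟩,
              j, hjs, Finset.ne_of_mem_erase hi⟩)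
            (fun i hi => hu i (Finset.mem_filter.mp hi).1)
            (fun i hi => (Finset.mem_filter.mp hi).2) ht
            (by rw [he, Finset.sum_filter_pos_smul ha]) hjs
      _ ≤ ∑ i ∈ s.erase j, a i :=
          Finset.sum_le_sum_of_subset_of_nonneg
            (Finset.erase_subset_erase _ (Finset.filter_subset _ _))
            fun i hi _ => ha i (Finset.mem_of_mem_erase hi)
  · refine (h.lt_sum (fun i hi => hu i (Finset.mem_of_mem_erase hi))
      (fun i hi => ha i (Finset.mem_of_mem_erase hi)) ht ?_).le
    rw [he, Finset.sum_erase _ (by rw [← haj, zero_smul])]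

theorem lt_add_of_smul_eq (h : IsSkeleton S e) {u v : X} {b c t : ℝ}
    (hu : u ∈ S \ {0, e}) (hv : v ∈ S \ {0, e}) (hb : 0 ≤ b) (hc : 0 ≤ c) (ht : 0 < t)
    (he : t • e = b • u + c • v) : t < b + c := by
  simpa [Fin.sum_univ_two] using h.lt_sum (s := .univ) (u := ![u, v]) (a := ![b, c])
    (fun i _ => by fin_cases i <;> assumption) (fun i _ => by fin_cases i <;> assumption) ht
    (by simpa [Fin.sum_univ_two] using he)

theorem le_add_of_smul_eq (h : IsSkeleton S e) {u v w : X} {b c d t : ℝ}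
    (hu : u ∈ S \ {0, e}) (hv : v ∈ S \ {0, e}) (hw : w ∈ S \ {0, e})
    (hb : 0 ≤ b) (hc : 0 ≤ c) (hd : 0 ≤ d) (hbc : 0 < b + c) (ht : 0 < t)
    (he : t • e = b • u + c • v + d • w) : t ≤ b + c := by
  have herase : ∑ i ∈ Finset.univ.erase 2, ![b, c, d] i = b + c := by
    rw [Finset.sum_erase_eq_sub (Finset.mem_univ _), Fin.sum_univ_three]
    simp
  rw [← herase]
  exact h.le_sum_erase (s := .univ) (u := ![u, v, w]) (a := ![b, c, d])
    (fun i _ => by fin_cases i <;> assumption) (fun i _ => by fin_cases i <;> assumption) ht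
    (by simpa [Fin.sum_univ_three] using he) (Finset.mem_univ 2) (herase ▸ hbc)

theorem exists_mem_convexHull_of_mem_segment (h : IsSkeleton S e) {u v z : X}
    (hu : u ∈ S \ {0, e}) (hv : v ∈ S \ {0, e}) (hz : z ∈ segment ℝ u v) :
    ∃ w ∈ S \ {0, e}, z ∈ convexHull ℝ {0, e, w} := by
  obtain ⟨l, m, hl, hm, hlm, rfl⟩ := hz
  obtain rfl : m = 1 - l := eq_sub_of_add_eq' hlm
  obtain ⟨w, hw, a, b, ha, hb, hcomb⟩ := h.comb u hu.1 v hv.1 l hl (by linarith)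
  refine ⟨w, hw, mem_convexHull_zero_triple_iff.mpr ⟨a, b, ha, hb, ?_, ?_⟩⟩
  · rcases (add_nonneg ha hb).eq_or_lt with hab | hab
    · linarith
    calc a + b ≤ l + (1 - l) := h.le_add_of_smul_eq hu hv (h.sub_mem_periphery hw) hl hm hb
          (by linarith) hab (by rw [hcomb]; module)
      _ = 1 := add_sub_cancel _ _
  · exact hcomb.symm

theorem convex_biUnion_convexHull (h : IsSkeleton S e) :
    Convex ℝ (⋃ u ∈ S \ {0, e}, convexHull ℝ {0, e, u}) := by
  intro x hx y hy a b ha hb hab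
  obtain ⟨u, hu, hxu⟩ := mem_iUnion₂.mp hx
  obtain ⟨v, hv, hyv⟩ := mem_iUnion₂.mp hy
  have hxy : a • x + b • y ∈ convexHull ℝ {0, e, u, v} :=
    convex_convexHull ℝ _ (convexHull_mono (by simp [insert_subset_iff]) hxu)
      (convexHull_mono (by simp [insert_subset_iff]) hyv) ha hb hab
  rw [← convexJoin_segments, mem_convexJoin] at hxy
  obtain ⟨p, hp, z, hz, hpz⟩ := hxy
  obtain ⟨w, hw, hzw⟩ := h.exists_mem_convexHull_of_mem_segment hu hv hz
  have hpw : p ∈ convexHull ℝ {0, e, w} := by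
    rw [← convexHull_pair] at hp
    exact convexHull_mono (by simp [insert_subset_iff]) hp
  exact mem_iUnion₂.mpr ⟨w, hw, (convex_convexHull ℝ _).segment_subset hpw hzw hpz⟩

theorem eq_head_of_mem_openSegment (h : IsSkeleton S e) {u v x y : X}
    (hu : u ∈ S \ {0, e}) (hv : v ∈ S \ {0, e}) (hx : x ∈ convexHull ℝ {0, e, u})
    (hy : y ∈ convexHull ℝ {0, e, v}) (he : e ∈ openSegment ℝ x y) : x = e := by
  obtain ⟨a₁, b₁, ha₁, hb₁, hab₁, rfl⟩ := mem_convexHull_zero_triple_iff.mp hx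
  obtain ⟨a₂, b₂, ha₂, hb₂, hab₂, rfl⟩ := mem_convexHull_zero_triple_iff.mp hy
  obtain ⟨l, m, hl, hm, hlm, hsum⟩ := he
  set t := 1 - (l * a₁ + m * a₂)
  have ht : t • e = (l * b₁) • u + (m * b₂) • v := by
    simp only [t, sub_smul, one_smul]
    nth_rewrite 1 [← hsum]
    module
  have hb : l * b₁ + m * b₂ ≤ 0 := by
    by_contra! hpos
    have := h.lt_add_of_smul_eq hu hv (by positivity) (by positivity) (by nlinarith) ht
    nlinarith
  have hb₁0 : b₁ = 0 := by nlinarith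
  have hb₂0 : b₂ = 0 := by nlinarith
  have ht0 : t = 0 := by
    simpa [hb₁0, hb₂0, h.head_ne] using ht
  have ha₁1 : a₁ = 1 := by nlinarith
  rw [ha₁1, hb₁0, one_smul, zero_smul, add_zero]

end IsSkeleton

theorem skeleton_K_convex_extreme
    {X : Type*} [AddCommGroup X] [Module ℝ X] {S : Set X} {e : X}
    (h : IsSkeleton S e) :
    Convex ℝ (⋃ u ∈ S \ {0, e}, convexHull ℝ {0, e, u}) ∧
    (0 : X) ∈ (⋃ u ∈ S \ {0, e}, convexHull ℝ {0, e, u}) ∧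
    e ∈ (⋃ u ∈ S \ {0, e}, convexHull ℝ {0, e, u}) ∧
    e ∈ Set.extremePoints ℝ (⋃ u ∈ S \ {0, e}, convexHull ℝ {0, e, u}) := by
  obtain ⟨w, hw⟩ := h.periphery_nonempty
  have hmem : ∀ x ∈ ({0, e, w} : Set X), x ∈ ⋃ u ∈ S \ {0, e}, convexHull ℝ {0, e, u} :=
    fun x hx => mem_iUnion₂.mpr ⟨w, hw, subset_convexHull ℝ _ hx⟩
  refine ⟨h.convex_biUnion_convexHull, hmem 0 (by simp), hmem e (by simp), hmem e (by simp), ?_⟩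
  intro x hx y hy hxy
  obtain ⟨u, hu, hxu⟩ := mem_iUnion₂.mp hx
  obtain ⟨v, hv, hyv⟩ := mem_iUnion₂.mp hy
  exact h.eq_head_of_mem_openSegment hu hv hxu hyv hxy
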